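/- Let H be a complex Hilbert space, D a dictionary (a set of unit vectors whose closed linear span equals H), M > 0, and f ∈ H(D,M). Suppose the Orthogonal Greedy Algorithm produces selections ψ_1, ψ_2, … ∈ D: with H_0 = {0}, H_k = span{ψ_1,…,ψ_k}, residuals f_k = f − P_{H_{k-1}}(f), selection condition |⟨f_k, ψ_k⟩| ≥ sup_{ψ∈D} |⟨f_k, ψ⟩| (i.e., maximal selection), and v_k := ‖ψ_k − P_{H_{k-1}}(ψ_k)‖ > 0. Then for every n ≥ 1, ‖f_n‖ ≤ M/√n. -/

import Mathlib

/-!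
After `k` steps the residual `f_k` is orthogonal to `H_{k-1}`, so `‖f_k‖² = ⟨f_k, f⟩`; expanding `f`
over the dictionary and using the maximality of the selection gives `‖f_k‖² ≤ M |⟨f_k, ψ_k⟩|`.
On the other hand `f - P_{H_{k-1}} f - ⟨ψ_k, f_k⟩ ψ_k` is a competitor for the projection onto
`H_k`, whence `‖f_{k+1}‖² ≤ ‖f_k‖² - |⟨f_k, ψ_k⟩|²`. Together `a_k = ‖f_k‖²` satisfies
`a_{k+1} ≤ a_k - a_k² / M²`, and this recursion forces `a_n ≤ M² / n`.
-/

noncomputable def proj {H : Type*} [NormedAddCommGroup H] [InnerProductSpace ℂ H]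
    [CompleteSpace H] (K : Submodule ℂ H) (f : H) : H :=
  haveI : CompleteSpace K.topologicalClosure := K.isClosed_topologicalClosure.completeSpace_coe
  (Submodule.orthogonalProjectionOnto K.topologicalClosure f : H)

open scoped InnerProductSpace

theorem le_div_succ_of_le_sub_sq_div {a : ℕ → ℝ} {A : ℝ} (hA : 0 < A) (ha : ∀ n, 0 ≤ a n)
    (h0 : a 0 ≤ A) (hrec : ∀ n, a (n + 1) ≤ a n - a n ^ 2 / A) (n : ℕ) : a n ≤ A / (n + 1) := by
  induction n with
  | zero => simpa using h0
  | succ m ih =>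
    set t : ℝ := m + 1 with ht
    have ht0 : 0 < t := by positivity
    rw [Nat.cast_succ, ← ht]
    rcases le_or_gt (a m) (A / (t + 1)) with hsmall | hlarge
    · have : 0 ≤ a m ^ 2 / A := by positivity
      linarith [hrec m]
    · have hupper : a m * t ≤ A := (le_div_iff₀ ht0).1 ih
      have hlower : A < a m * (t + 1) := (div_lt_iff₀ (by positivity)).1 hlarge
      -- `a m (A - a m) (t + 1) < a m A t ≤ A²`
      have key : a m * (A - a m) * (t + 1) ≤ A * A := by
        nlinarith [mul_le_mul_of_nonneg_left hlower.le (ha m),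
          mul_le_mul_of_nonneg_left hupper hA.le]
      have hsplit : a m - a m ^ 2 / A = a m * (A - a m) / A := by field_simp
      calc a (m + 1) ≤ a m * (A - a m) / A := hsplit ▸ hrec m
        _ ≤ A / (t + 1) := by rw [div_le_div_iff₀ hA (by positivity)]; exact key

theorem le_div_succ_of_le_sub_sq_of_le_mul {a b : ℕ → ℝ} {M : ℝ} (hM : 0 < M)
    (ha : ∀ n, 0 ≤ a n) (hdecay : ∀ n, a (n + 1) ≤ a n - b n ^ 2) (hgreedy : ∀ n, a n ≤ M * b n)
    (n : ℕ) : a n ≤ M ^ 2 / (n + 1) := by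
  have hsq_le : ∀ n, a n ^ 2 ≤ M ^ 2 * b n ^ 2 := fun n => by
    rw [← mul_pow]; exact pow_le_pow_left₀ (ha n) (hgreedy n) 2
  refine le_div_succ_of_le_sub_sq_div (by positivity) ha ?_ (fun n => ?_) n
  · -- `b 0 ² ≤ a 0` because `a 1 ≥ 0`
    nlinarith [hsq_le 0, hdecay 0, ha 1, ha 0]
  · have : a n ^ 2 / M ^ 2 ≤ b n ^ 2 := by
      rw [div_le_iff₀ (by positivity), mul_comm]; exact hsq_le n
    linarith [hdecay n]

section InnerProductSpace

variable {𝕜 E : Type*} [RCLike 𝕜] [NormedAddCommGroup E] [InnerProductSpace 𝕜 E]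

theorem norm_sub_inner_smul_sq {ψ : E} (hψ : ‖ψ‖ = 1) (r : E) :
    ‖r - ⟪ψ, r⟫_𝕜 • ψ‖ ^ 2 = ‖r‖ ^ 2 - ‖⟪r, ψ⟫_𝕜‖ ^ 2 := by
  have hre : RCLike.re (⟪ψ, r⟫_𝕜 * ⟪r, ψ⟫_𝕜) = ‖⟪r, ψ⟫_𝕜‖ ^ 2 := by
    rw [← inner_conj_symm ψ r, mul_comm, RCLike.mul_conj, ← RCLike.ofReal_pow, RCLike.ofReal_re]
  rw [norm_sub_sq (𝕜 := 𝕜), inner_smul_right, hre, norm_smul, hψ, mul_one, norm_inner_symm]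
  ring

theorem norm_inner_le_of_hasSum {ι : Type*} {c : ι → 𝕜} {φ : ι → E} {f : E}
    (hf : HasSum (fun j => c j • φ j) f) (hc : Summable fun j => ‖c j‖) {r : E} {B : ℝ}
    (hB : ∀ j, ‖⟪r, φ j⟫_𝕜‖ ≤ B) : ‖⟪r, f⟫_𝕜‖ ≤ (∑' j, ‖c j‖) * B := by
  have hsum : HasSum (fun j => c j * ⟪r, φ j⟫_𝕜) ⟪r, f⟫_𝕜 := by
    simpa only [innerSL_apply_apply, inner_smul_right] using hf.mapL (innerSL 𝕜 r)
  refine hsum.norm_le_of_bounded (hc.hasSum.mul_right B) fun j => ?_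
  rw [norm_mul]
  exact mul_le_mul_of_nonneg_left (hB j) (norm_nonneg _)

theorem norm_inner_le_iSup_of_mem {D : Set E} (hD : ∀ φ ∈ D, ‖φ‖ ≤ 1) (r : E) {φ : E}
    (hφ : φ ∈ D) : ‖⟪r, φ⟫_𝕜‖ ≤ ⨆ φ : D, ‖⟪r, (φ : E)⟫_𝕜‖ := by
  refine le_ciSup (f := fun φ : D => ‖⟪r, (φ : E)⟫_𝕜‖) ⟨‖r‖, ?_⟩ ⟨φ, hφ⟩
  rintro _ ⟨φ, rfl⟩
  calc ‖⟪r, (φ : E)⟫_𝕜‖ ≤ ‖r‖ * ‖(φ : E)‖ := norm_inner_le_norm _ _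
    _ ≤ ‖r‖ := mul_le_of_le_one_right (norm_nonneg r) (hD φ φ.2)

namespace Submodule

theorem norm_sub_starProjection_le {U : Submodule 𝕜 E} [U.HasOrthogonalProjection]
    (y : E) {x : E} (hx : x ∈ U) : ‖y - U.starProjection y‖ ≤ ‖y - x‖ := by
  rw [starProjection_minimal]
  exact ciInf_le ⟨0, by rintro _ ⟨z, rfl⟩; positivity⟩ (⟨x, hx⟩ : U)

theorem inner_sub_starProjection_self (U : Submodule 𝕜 E) [U.HasOrthogonalProjection]
    (v : E) : ⟪v - U.starProjection v, v⟫_𝕜 = (‖v - U.starProjection v‖ ^ 2 : ℝ) := by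
  set w := v - U.starProjection v
  calc ⟪w, v⟫_𝕜 = ⟪w, w + U.starProjection v⟫_𝕜 := by rw [sub_add_cancel]
    _ = ⟪w, w⟫_𝕜 := by
      rw [inner_add_right, U.starProjection_inner_eq_zero _ _ (U.starProjection_apply_mem v),
        add_zero]
    _ = (‖w‖ ^ 2 : ℝ) := by rw [inner_self_eq_norm_sq_to_K]; push_cast; rfl

theorem norm_sub_starProjection_sq_le_of_iSup_le {ι : Type*} {D : Set E}
    (hD : ∀ φ ∈ D, ‖φ‖ ≤ 1) {c : ι → 𝕜} {φ : ι → E} (hφ : ∀ j, φ j ∈ D) {f : E}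
    (hf : HasSum (fun j => c j • φ j) f) (hc : Summable fun j => ‖c j‖) {M : ℝ}
    (hcM : ∑' j, ‖c j‖ ≤ M) (U : Submodule 𝕜 E) [U.HasOrthogonalProjection] {ψ : E}
    (hsel : ⨆ φ : D, ‖⟪f - U.starProjection f, (φ : E)⟫_𝕜‖ ≤ ‖⟪f - U.starProjection f, ψ⟫_𝕜‖) :
    ‖f - U.starProjection f‖ ^ 2 ≤ M * ‖⟪f - U.starProjection f, ψ⟫_𝕜‖ := by
  set r := f - U.starProjection f
  have hmax : ∀ j, ‖⟪r, φ j⟫_𝕜‖ ≤ ‖⟪r, ψ⟫_𝕜‖ := fun j =>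
    (norm_inner_le_iSup_of_mem hD r (hφ j)).trans hsel
  have hself : ‖⟪r, f⟫_𝕜‖ = ‖r‖ ^ 2 := by
    rw [inner_sub_starProjection_self, RCLike.norm_ofReal, abs_of_nonneg (by positivity)]
  calc ‖r‖ ^ 2 = ‖⟪r, f⟫_𝕜‖ := hself.symm
    _ ≤ (∑' j, ‖c j‖) * ‖⟪r, ψ⟫_𝕜‖ := norm_inner_le_of_hasSum hf hc hmax
    _ ≤ M * ‖⟪r, ψ⟫_𝕜‖ := by gcongr

theorem norm_sub_starProjection_sq_le_of_le {U U' : Submodule 𝕜 E} [U.HasOrthogonalProjection]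
    [U'.HasOrthogonalProjection] (hU : U ≤ U') {ψ : E} (hψU' : ψ ∈ U') (hψ : ‖ψ‖ = 1) (f : E) :
    ‖f - U'.starProjection f‖ ^ 2 ≤
      ‖f - U.starProjection f‖ ^ 2 - ‖⟪f - U.starProjection f, ψ⟫_𝕜‖ ^ 2 := by
  set r := f - U.starProjection f
  have hmem : U.starProjection f + ⟪ψ, r⟫_𝕜 • ψ ∈ U' :=
    add_mem (hU (U.starProjection_apply_mem f)) (U'.smul_mem _ hψU')
  calc ‖f - U'.starProjection f‖ ^ 2 ≤ ‖f - (U.starProjection f + ⟪ψ, r⟫_𝕜 • ψ)‖ ^ 2 := by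
        gcongr; exact norm_sub_starProjection_le f hmem
    _ = ‖r‖ ^ 2 - ‖⟪r, ψ⟫_𝕜‖ ^ 2 := by rw [← sub_sub, norm_sub_inner_smul_sq hψ]

instance hasOrthogonalProjection_topologicalClosure [CompleteSpace E] (K : Submodule 𝕜 E) :
    K.topologicalClosure.HasOrthogonalProjection :=
  haveI := K.isClosed_topologicalClosure.completeSpace_coe
  inferInstance

end Submodule

end InnerProductSpace

theorem proj_eq_starProjection {H : Type*} [NormedAddCommGroup H] [InnerProductSpace ℂ H]
    [CompleteSpace H] (K : Submodule ℂ H) (f : H) :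
    proj K f = K.topologicalClosure.starProjection f :=
  rfl

theorem stmt6_general {H : Type*} [NormedAddCommGroup H] [InnerProductSpace ℂ H] [CompleteSpace H]
    (D : Set H) (hD_unit : ∀ φ ∈ D, ‖φ‖ = 1)
    (M : ℝ) (hM : 0 < M)
    (c : ℕ → ℂ) (ψt : ℕ → H) (hψt : ∀ j, ψt j ∈ D)
    (f : H) (hf : HasSum (fun j => c j • ψt j) f)
    (hc_summable : Summable fun j => ‖c j‖) (hcM : ∑' j, ‖c j‖ ≤ M)
    (ψ : ℕ → H) (hψD : ∀ k, 1 ≤ k → ψ k ∈ D)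
    (Hk : ℕ → Submodule ℂ H)
    (hHk : ∀ k, Hk k = Submodule.span ℂ (ψ '' {j | 1 ≤ j ∧ j ≤ k}))
    (fk : ℕ → H) (hfk : ∀ n, 1 ≤ n → fk n = f - proj (Hk (n - 1)) f)
    (hsel : ∀ k, 1 ≤ k →
      (⨆ φ : D, ‖(inner ℂ (fk k) (φ : H) : ℂ)‖) ≤ ‖(inner ℂ (fk k) (ψ k) : ℂ)‖) :
    ∀ n, 1 ≤ n → ‖fk n‖ ≤ M / Real.sqrt n := by
  have hdecay (k : ℕ) (hk : 1 ≤ k) : ‖fk (k + 1)‖ ^ 2 ≤ ‖fk k‖ ^ 2 - ‖⟪fk k, ψ k⟫_ℂ‖ ^ 2 := by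
    have hmono : Hk (k - 1) ≤ Hk k := by
      rw [hHk, hHk]
      exact Submodule.span_mono (Set.image_mono fun j hj => ⟨hj.1, hj.2.trans (Nat.sub_le k 1)⟩)
    have hψ : ψ k ∈ Hk k := hHk k ▸ Submodule.subset_span ⟨k, ⟨hk, le_rfl⟩, rfl⟩
    rw [hfk (k + 1) (by omega), hfk k hk, Nat.add_sub_cancel, proj_eq_starProjection,
      proj_eq_starProjection]
    exact Submodule.norm_sub_starProjection_sq_le_of_le (Submodule.topologicalClosure_mono hmono)
      ((Hk k).le_topologicalClosure hψ) (hD_unit _ (hψD k hk)) f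
  have hgreedy (k : ℕ) (hk : 1 ≤ k) : ‖fk k‖ ^ 2 ≤ M * ‖⟪fk k, ψ k⟫_ℂ‖ := by
    have hselk := hsel k hk
    rw [hfk k hk, proj_eq_starProjection] at hselk ⊢
    exact Submodule.norm_sub_starProjection_sq_le_of_iSup_le (fun φ hφ => (hD_unit φ hφ).le) hψt
      hf hc_summable hcM _ hselk
  have hrate (m : ℕ) : ‖fk (m + 1)‖ ^ 2 ≤ M ^ 2 / (m + 1) :=
    le_div_succ_of_le_sub_sq_of_le_mul (a := fun m => ‖fk (m + 1)‖ ^ 2) hM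
      (fun _ => by positivity) (fun m => hdecay (m + 1) (by omega))
      (fun m => hgreedy (m + 1) (by omega)) m
  intro n hn
  obtain ⟨m, rfl⟩ : ∃ m, n = m + 1 := ⟨n - 1, by omega⟩
  calc ‖fk (m + 1)‖ ≤ √(M ^ 2 / (m + 1)) := (le_abs_self _).trans (Real.abs_le_sqrt (hrate m))
    _ = M / √↑(m + 1) := by push_cast; rw [Real.sqrt_div' _ (by positivity), Real.sqrt_sq hM.le]

/-- Error bound of OGA: for `f ∈ H(D,M)` and maximal greedy selections `ψ k`, with
residuals `fk n = f - P_{H_{n-1}} f` and `v k = ‖ψ k - P_{H_{k-1}} ψ k‖ > 0`, one has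
`‖fk n‖ ≤ M / √n`. -/
theorem stmt6 {H : Type*} [NormedAddCommGroup H] [InnerProductSpace ℂ H] [CompleteSpace H]
    (D : Set H) (hD_unit : ∀ φ ∈ D, ‖φ‖ = 1)
    (hD_span : (Submodule.span ℂ D).topologicalClosure = ⊤)
    (M : ℝ) (hM : 0 < M)
    (c : ℕ → ℂ) (ψt : ℕ → H) (hψt : ∀ j, ψt j ∈ D)
    (f : H) (hf : HasSum (fun j => c j • ψt j) f)
    (hc_summable : Summable fun j => ‖c j‖) (hcM : ∑' j, ‖c j‖ ≤ M)
    (ψ : ℕ → H) (hψD : ∀ k, 1 ≤ k → ψ k ∈ D)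
    (Hk : ℕ → Submodule ℂ H)
    (hHk : ∀ k, Hk k = Submodule.span ℂ (ψ '' {j | 1 ≤ j ∧ j ≤ k}))
    (fk : ℕ → H) (hfk : ∀ n, 1 ≤ n → fk n = f - proj (Hk (n - 1)) f)
    (hsel : ∀ k, 1 ≤ k →
      (⨆ φ : D, ‖(inner ℂ (fk k) (φ : H) : ℂ)‖) ≤ ‖(inner ℂ (fk k) (ψ k) : ℂ)‖)
    (hv : ∀ k, 1 ≤ k → 0 < ‖ψ k - proj (Hk (k - 1)) (ψ k)‖) :
    ∀ n, 1 ≤ n → ‖fk n‖ ≤ M / Real.sqrt n :=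
  stmt6_general D hD_unit M hM c ψt hψt f hf hc_summable hcM ψ hψD Hk hHk fk hfk hsel
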